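/- arXiv:2103.07548 — 4 statements merged into one kernel-verified Lean document; each statement's English description precedes it below -/
import Mathlib

section
/- If q is a rational number in [0,1] with q = a/d (a, d natural numbers, d > 0), then applying either the operation x ↦ max(0, 2x-1) or x ↦ 1-x to q yields a rational number in [0,1] that can be written with the same denominator d. Consequently, the subalgebra of [0,1] under these operations generated by a rational number a/d is finite, with at most d+1 elements. -/
lemma star_lem (a d : ℕ) (hd : 0 < d) (ha : a ≤ d) :
    ∃ b : ℕ, b ≤ d ∧ max 0 (2 * ((a : ℝ) / d) - 1) = (b : ℝ) / d := by
  have hd' : (0:ℝ) < d := by exact_mod_cast hd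
  rcases le_or_gt (2 * a) d with h | h
  · refine ⟨0, Nat.zero_le _, ?_⟩
    have h2 : (2*a : ℝ) ≤ d := by exact_mod_cast h
    have : 2 * ((a:ℝ)/d) - 1 ≤ 0 := by
      rw [sub_nonpos]
      calc 2 * ((a:ℝ)/d) = (2*a)/d := by ring
        _ ≤ 1 := by rw [div_le_one hd']; linarith
    simp [max_eq_left this]
  · refine ⟨2 * a - d, by omega, ?_⟩
    have hb : ((2*a - d : ℕ) : ℝ) = 2 * a - d := by
      push_cast [Nat.cast_sub h.le]; ring
    have h2 : (d:ℝ) < 2*a := by exact_mod_cast h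
    have hpos : 0 ≤ 2 * ((a:ℝ)/d) - 1 := by
      rw [sub_nonneg]
      calc (1:ℝ) ≤ (2*a)/d := by rw [le_div_iff₀ hd']; linarith
        _ = 2 * ((a:ℝ)/d) := by ring
    rw [max_eq_right hpos, hb]
    field_simp

lemma neg_lem (a d : ℕ) (hd : 0 < d) (ha : a ≤ d) :
    ∃ b : ℕ, b ≤ d ∧ 1 - (a : ℝ) / d = (b : ℝ) / d := by
  have hd' : (0:ℝ) < d := by exact_mod_cast hd
  refine ⟨d - a, by omega, ?_⟩
  have hb : ((d - a : ℕ) : ℝ) = d - a := by push_cast [Nat.cast_sub ha]; ring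
  rw [hb]
  field_simp

theorem rational_generates_finite (a d : ℕ) (hd : 0 < d) (ha : a ≤ d) :
    ((∃ b : ℕ, b ≤ d ∧ max 0 (2 * ((a : ℝ) / d) - 1) = (b : ℝ) / d) ∧
     (∃ b : ℕ, b ≤ d ∧ 1 - (a : ℝ) / d = (b : ℝ) / d)) ∧
    (Set.Finite (⋂₀ {S : Set ℝ | ((a : ℝ) / d ∈ S ∧ (0:ℝ) ∈ S ∧ (1:ℝ) ∈ S) ∧
        ∀ x ∈ S, max 0 (2 * x - 1) ∈ S ∧ (1 - x) ∈ S}) ∧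
     (⋂₀ {S : Set ℝ | ((a : ℝ) / d ∈ S ∧ (0:ℝ) ∈ S ∧ (1:ℝ) ∈ S) ∧
        ∀ x ∈ S, max 0 (2 * x - 1) ∈ S ∧ (1 - x) ∈ S}).ncard ≤ d + 1) := by
  have hd' : (0:ℝ) < d := by exact_mod_cast hd
  refine ⟨⟨star_lem a d hd ha, neg_lem a d hd ha⟩, ?_⟩
  set T : Set ℝ := ↑((Finset.range (d+1)).image (fun b : ℕ => (b:ℝ)/d)) with hT
  have hmem : ∀ b : ℕ, b ≤ d → (b:ℝ)/d ∈ T := by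
    intro b hb
    simp only [hT, Finset.coe_image, Set.mem_image, Finset.mem_coe, Finset.mem_range]
    exact ⟨b, by omega, rfl⟩
  have hTS : T ∈ {S : Set ℝ | ((a : ℝ) / d ∈ S ∧ (0:ℝ) ∈ S ∧ (1:ℝ) ∈ S) ∧
        ∀ x ∈ S, max 0 (2 * x - 1) ∈ S ∧ (1 - x) ∈ S} := by
    refine ⟨⟨hmem a ha, ?_, ?_⟩, ?_⟩
    · have := hmem 0 (Nat.zero_le d); simpa using this
    · have := hmem d le_rfl
      rwa [div_self hd'.ne'] at this
    · intro x hx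
      simp only [hT, Finset.coe_image, Set.mem_image, Finset.mem_coe, Finset.mem_range] at hx
      obtain ⟨b, hb, rfl⟩ := hx
      have hb' : b ≤ d := by omega
      constructor
      · obtain ⟨c, hc, hceq⟩ := star_lem b d hd hb'
        rw [hceq]; exact hmem c hc
      · obtain ⟨c, hc, hceq⟩ := neg_lem b d hd hb'
        rw [hceq]; exact hmem c hc
  have hsub : (⋂₀ {S : Set ℝ | ((a : ℝ) / d ∈ S ∧ (0:ℝ) ∈ S ∧ (1:ℝ) ∈ S) ∧
        ∀ x ∈ S, max 0 (2 * x - 1) ∈ S ∧ (1 - x) ∈ S}) ⊆ T :=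
    Set.sInter_subset_of_mem hTS
  have hTfin : T.Finite := ((Finset.range (d+1)).image (fun b : ℕ => (b:ℝ)/d)).finite_toSet
  refine ⟨hTfin.subset hsub, ?_⟩
  refine le_trans (Set.ncard_le_ncard hsub hTfin) ?_
  rw [hT, Set.ncard_coe_finset]
  exact le_trans Finset.card_image_le (by simp)
end

section
/- In Ł_{n+1} = {k/n : 0 ≤ k ≤ n}, the n-fold iteration of the square operator * coincides with the Baaz-Monteiro Delta: *^n x = 1 if x = 1 and *^n x = 0 if x < 1, for all x in Ł_{n+1}. -/
/-! Writing `*` as `y ↦ max 0 (1 - 2 * (1 - y))`, its iterates on `[0, ∞)` are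
`y ↦ max 0 (1 - 2 ^ j * (1 - y))`: each square doubles the distance to `1`, truncated at `0`.
A point `k / n < 1` of `Ł_{n+1}` is at distance at least `1 / n` from `1`, and `2 ^ n / n ≥ 1`,
so `n` squarings send it to `0`, while `1` is a fixed point. -/

lemma iterate_max_zero_two_mul_sub_one (j : ℕ) {x : ℝ} (hx : 0 ≤ x) :
    (fun y : ℝ => max 0 (2 * y - 1))^[j] x = max 0 (1 - 2 ^ j * (1 - x)) := by
  induction j with
  | zero => simp [hx]
  | succ j ih =>
    rw [Function.iterate_succ_apply', ih, pow_succ]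
    rcases le_total (1 - 2 ^ j * (1 - x)) 0 with h | h
    · have h' : 1 - 2 ^ j * 2 * (1 - x) ≤ 0 := by linarith
      rw [max_eq_left h, max_eq_left h', max_eq_left (by norm_num)]
    · rw [max_eq_right h]
      ring_nf

lemma one_le_two_pow_mul_one_sub_div {k n : ℕ} (hk : k ≤ n) (hkn : (k : ℝ) / n ≠ 1) :
    1 ≤ 2 ^ n * (1 - (k : ℝ) / n) := by
  rcases n.eq_zero_or_pos with rfl | hn
  · simp
  have hn' : (0 : ℝ) < n := by exact_mod_cast hn
  have hlt : (k : ℝ) + 1 ≤ n := by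
    have : k ≠ n := by rintro rfl; exact hkn (div_self hn'.ne')
    exact_mod_cast Nat.lt_of_le_of_ne hk this
  have h2n : (n : ℝ) ≤ 2 ^ n := by exact_mod_cast (Nat.lt_two_pow_self).le
  calc 1 ≤ (2 : ℝ) ^ n / n := (one_le_div hn').mpr h2n
    _ = 2 ^ n * (1 / n) := by ring
    _ ≤ 2 ^ n * (1 - k / n) := by
      gcongr
      rw [le_sub_iff_add_le, ← add_div, div_le_one hn']
      linarith

theorem iterate_square_is_delta_general (n : ℕ) (k : ℕ) (hk : k ≤ n) :
    (fun y : ℝ => max 0 (2 * y - 1))^[n] ((k : ℝ) / n) =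
      if (k : ℝ) / n = 1 then 1 else 0 := by
  split_ifs with hkn
  · rw [hkn]
    exact Function.iterate_fixed (by norm_num) n
  · rw [iterate_max_zero_two_mul_sub_one n (by positivity)]
    exact max_eq_left (by linarith [one_le_two_pow_mul_one_sub_div hk hkn])

theorem iterate_square_is_delta (n : ℕ) (hn : 0 < n) (k : ℕ) (hk : k ≤ n) :
    (fun y : ℝ => max 0 (2 * y - 1))^[n] ((k : ℝ) / n) =
      if (k : ℝ) / n = 1 then 1 else 0 :=
  iterate_square_is_delta_general n k hk
end

section
/- In Ł_4 = {0, 1/3, 2/3, 1}, the Łukasiewicz implication x ⇒ y = min(1, 1-x+y) is definable as a term in the operations max, ¬x = 1-x, and *x = max(0, 2x-1): i.e., there is a function built by composing these operations that equals ⇒ on Ł_4. -/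
inductive LTerm : Type
  | var0 : LTerm
  | var1 : LTerm
  | zero : LTerm
  | one : LTerm
  | neg : LTerm → LTerm
  | sq : LTerm → LTerm
  | join : LTerm → LTerm → LTerm

noncomputable def LTerm.eval : LTerm → ℝ → ℝ → ℝ
  | LTerm.var0, x, _ => x
  | LTerm.var1, _, y => y
  | LTerm.zero, _, _ => 0
  | LTerm.one, _, _ => 1
  | LTerm.neg t, x, y => 1 - t.eval x y
  | LTerm.sq t, x, y => max 0 (2 * t.eval x y - 1)
  | LTerm.join s t, x, y => max (s.eval x y) (t.eval x y)

theorem luk_implication_definable_L4 :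
    ∃ t : LTerm, ∀ x ∈ ({0, 1/3, 2/3, 1} : Set ℝ), ∀ y ∈ ({0, 1/3, 2/3, 1} : Set ℝ),
      t.eval x y = min 1 (1 - x + y) := by
  refine ⟨LTerm.neg (LTerm.join (LTerm.join
      (LTerm.neg (LTerm.join (LTerm.neg (LTerm.sq LTerm.var0))
        (LTerm.neg (LTerm.sq (LTerm.neg LTerm.var1)))))
      (LTerm.neg (LTerm.join (LTerm.neg LTerm.var0)
        (LTerm.neg (LTerm.sq (LTerm.sq (LTerm.neg LTerm.var1)))))))
      (LTerm.neg (LTerm.join (LTerm.neg (LTerm.neg LTerm.var1))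
        (LTerm.neg (LTerm.sq (LTerm.sq LTerm.var0)))))), ?_⟩
  intro x hx y hy
  simp only [Set.mem_insert_iff, Set.mem_singleton_iff] at hx hy
  rcases hx with rfl | rfl | rfl | rfl <;> rcases hy with rfl | rfl | rfl | rfl <;>
    simp only [LTerm.eval] <;> norm_num
end

section
/- If n > 5 is of the form n = 2^m + 1 with m > 2, then the subalgebra of Ł_{n+1} generated by its coatom (n-1)/n under *x = max(0,2x-1) and ¬x = 1-x has at most 2m + 2 elements, and since 2m + 2 < 2^m + 1 = n, it is a proper nontrivial subalgebra of Ł_{n+1}. -/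
def Fe (m : ℕ) : Finset ℕ :=
  insert 0 (insert (2^m+1)
    (((Finset.range (m+1)).image (2 ^ ·)) ∪
     ((Finset.Ico 1 m).image (fun j => 2^m + 1 - 2^j))))

lemma mem_Fe {m k : ℕ} : k ∈ Fe m ↔
    k = 0 ∨ k = 2^m+1 ∨ (∃ j, j ≤ m ∧ 2^j = k) ∨
    (∃ j, 1 ≤ j ∧ j < m ∧ 2^m+1-2^j = k) := by
  simp [Fe, Nat.lt_succ_iff, and_assoc]

lemma Fe_card {m : ℕ} (hm : 2 < m) : (Fe m).card ≤ 2*m+2 := by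
  have h1 := Finset.card_insert_le 0 (insert (2^m+1)
    (((Finset.range (m+1)).image (2 ^ ·)) ∪
     ((Finset.Ico 1 m).image (fun j => 2^m + 1 - 2^j))))
  have h2 := Finset.card_insert_le (2^m+1)
    (((Finset.range (m+1)).image (2 ^ ·)) ∪
     ((Finset.Ico 1 m).image (fun j => 2^m + 1 - 2^j)))
  have h3 := Finset.card_union_le ((Finset.range (m+1)).image (2 ^ ·))
     ((Finset.Ico 1 m).image (fun j => 2^m + 1 - 2^j))
  have h4 := Finset.card_image_le (s := Finset.range (m+1)) (f := (2 ^ · : ℕ → ℕ))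
  have h5 := Finset.card_image_le (s := Finset.Ico 1 m) (f := fun j => 2^m + 1 - 2^j)
  simp [Finset.card_range, Nat.card_Ico] at h4 h5
  unfold Fe
  omega

lemma Fe_le {m k : ℕ} (hk : k ∈ Fe m) : k ≤ 2^m + 1 := by
  rw [mem_Fe] at hk
  have hp : 1 ≤ 2^m := Nat.one_le_two_pow
  rcases hk with h | h | ⟨j, hj, h⟩ | ⟨j, _, _, h⟩
  · omega
  · omega
  · have : 2^j ≤ 2^m := Nat.pow_le_pow_right (by norm_num) hj
    omega
  · have : 1 ≤ 2^j := Nat.one_le_two_pow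
    omega

lemma Fe_neg {m k : ℕ} (hk : k ∈ Fe m) : 2^m+1-k ∈ Fe m := by
  rw [mem_Fe] at hk ⊢
  have hp : 1 ≤ 2^m := Nat.one_le_two_pow
  rcases hk with h | h | ⟨j, hj, h⟩ | ⟨j, hj1, hj2, h⟩
  · right; left; omega
  · left; omega
  · rcases Nat.eq_or_lt_of_le hj with rfl | hjm
    · right; right; left; exact ⟨0, by omega, by omega⟩
    · rcases Nat.eq_zero_or_pos j with rfl | hj0
      · right; right; left
        refine ⟨m, le_refl m, ?_⟩
        simp only [pow_zero] at h
        omega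
      · right; right; right; exact ⟨j, hj0, hjm, by omega⟩
  · right; right; left
    have h2 : 2^j ≤ 2^m := Nat.pow_le_pow_right (by norm_num) (le_of_lt hj2)
    have h2' : 1 ≤ 2^j := Nat.one_le_two_pow
    exact ⟨j, le_of_lt hj2, by omega⟩

lemma Fe_star {m k : ℕ} (hm : 2 < m) (hk : k ∈ Fe m) (h2 : 2^m+1 < 2*k) :
    2*k - (2^m+1) ∈ Fe m := by
  rw [mem_Fe] at hk ⊢
  have hp : 1 ≤ 2^m := Nat.one_le_two_pow
  rcases hk with h | h | ⟨j, hj, h⟩ | ⟨j, hj1, hj2, h⟩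
  · omega
  · right; left; omega
  · -- k = 2^j, 2^{j+1} > 2^m+1 forces j = m
    have hjm : j = m := by
      by_contra hne
      have : j + 1 ≤ m := by omega
      have : 2^(j+1) ≤ 2^m := Nat.pow_le_pow_right (by norm_num) this
      rw [pow_succ] at this
      omega
    subst hjm
    right; right; right
    refine ⟨1, le_refl 1, by omega, by norm_num; omega⟩
  · -- k = 2^m+1-2^j ; 2k - (2^m+1) = 2^m+1 - 2^(j+1)
    have h2j : 2^j ≤ 2^m := Nat.pow_le_pow_right (by norm_num) (le_of_lt hj2)
    rcases Nat.eq_or_lt_of_le (Nat.succ_le_of_lt hj2) with hjm | hjm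
    · -- j+1 = m : result is 2^m+1 - 2^m = 1 = 2^0
      right; right; left
      refine ⟨0, by omega, ?_⟩
      have hq : 2^(j+1) = 2^m := by rw [← hjm]
      rw [pow_succ] at hq
      have h2' : 1 ≤ 2^j := Nat.one_le_two_pow
      omega
    · right; right; right
      refine ⟨j+1, by omega, hjm, ?_⟩
      have hq : 2^(j+1) ≤ 2^m := Nat.pow_le_pow_right (by norm_num) (by omega)
      rw [pow_succ] at hq ⊢
      have h2' : 1 ≤ 2^j := Nat.one_le_two_pow
      omega

lemma pow_gap (m : ℕ) (hm : 2 < m) : 2 * m + 2 < 2^m + 1 := by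
  induction m with
  | zero => omega
  | succ k ih =>
    rcases Nat.lt_or_ge 2 k with h | h
    · have h1 := ih h
      have h2 : 1 ≤ 2^k := Nat.one_le_two_pow
      rw [pow_succ]; omega
    · have hk : k = 2 := by omega
      subst hk; norm_num

lemma three_not_Fe {m : ℕ} (hm : 2 < m) : 3 ∉ Fe m := by
  rw [mem_Fe]
  push_neg
  have h8 : 8 ≤ 2^m := by
    calc (8:ℕ) = 2^3 := by norm_num
    _ ≤ 2^m := Nat.pow_le_pow_right (by norm_num) hm
  refine ⟨by omega, by omega, ?_, ?_⟩
  · rintro j hj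
    match j with
    | 0 => norm_num
    | 1 => norm_num
    | (j+2) =>
      have : 1 ≤ 2^j := Nat.one_le_two_pow
      have : 2^(j+2) = 4 * 2^j := by ring
      omega
  · rintro j hj1 hj2
    have h2j : 2^j ≤ 2^(m-1) := Nat.pow_le_pow_right (by norm_num) (by omega)
    have hm1 : 2 * 2^(m-1) = 2^m := by
      rw [← pow_succ']
      congr 1; omega
    match j, hj1 with
    | 1, _ => omega
    | (j+2), _ =>
      have h1 : 1 ≤ 2^j := Nat.one_le_two_pow
      have h4 : 2^(j+2) = 4 * 2^j := by ring
      have h8' : 2^m = 8 * 2^(m-3) := by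
        conv_lhs => rw [show m = (m-3)+3 by omega]
        ring
      omega

noncomputable def Sr (m : ℕ) : Set ℝ :=
  (fun k : ℕ => (k : ℝ) / ((2^m + 1 : ℕ) : ℝ)) '' ↑(Fe m)

lemma nr_pos (m : ℕ) : (0:ℝ) < ((2^m + 1 : ℕ) : ℝ) := by
  have : (0:ℕ) < 2^m + 1 := by positivity
  exact_mod_cast this

lemma Sr_mem_set (m : ℕ) (hm : 2 < m) :
    Sr m ∈ {S : Set ℝ | ((((2^m + 1 : ℕ) : ℝ) - 1) / ((2^m + 1 : ℕ) : ℝ) ∈ S ∧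
          (0:ℝ) ∈ S ∧ (1:ℝ) ∈ S) ∧
        ∀ y ∈ S, max 0 (2 * y - 1) ∈ S ∧ (1 - y) ∈ S} := by
  have hnp := nr_pos m
  have hnne : ((2^m + 1 : ℕ) : ℝ) ≠ 0 := ne_of_gt hnp
  constructor
  · refine ⟨⟨2^m, ?_, ?_⟩, ⟨0, ?_, by simp⟩, ⟨2^m+1, ?_, by field_simp⟩⟩
    · exact_mod_cast Finset.mem_coe.2 (mem_Fe.2 (Or.inr (Or.inr (Or.inl ⟨m, le_refl m, rfl⟩))))
    · push_cast; ring
    · exact Finset.mem_coe.2 (mem_Fe.2 (Or.inl rfl))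
    · exact Finset.mem_coe.2 (mem_Fe.2 (Or.inr (Or.inl rfl)))
  · rintro y ⟨k, hk, rfl⟩
    rw [Finset.mem_coe] at hk
    have hkN : k ≤ 2^m+1 := Fe_le hk
    constructor
    · rcases le_or_gt (2*k) (2^m+1) with h2 | h2
      · have hle : 2 * ((k:ℝ)/((2^m + 1 : ℕ) : ℝ)) - 1 ≤ 0 := by
          rw [sub_nonpos, ← mul_div_assoc, div_le_one hnp]
          exact_mod_cast h2
        rw [max_eq_left hle]
        exact ⟨0, Finset.mem_coe.2 (mem_Fe.2 (Or.inl rfl)), by simp⟩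
      · have hmem := Fe_star hm hk h2
        refine ⟨2*k - (2^m+1), Finset.mem_coe.2 hmem, ?_⟩
        have hge : 0 ≤ 2 * ((k:ℝ)/((2^m + 1 : ℕ) : ℝ)) - 1 := by
          rw [sub_nonneg, ← mul_div_assoc, le_div_iff₀ hnp, one_mul]
          exact_mod_cast le_of_lt h2
        show ((2*k - (2^m+1) : ℕ) : ℝ) / ((2^m + 1 : ℕ) : ℝ) = _
        rw [max_eq_right hge, Nat.cast_sub (le_of_lt h2)]
        push_cast
        field_simp
    · refine ⟨2^m+1-k, Finset.mem_coe.2 (Fe_neg hk), ?_⟩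
      show ((2^m+1-k : ℕ) : ℝ) / ((2^m + 1 : ℕ) : ℝ) = _
      rw [Nat.cast_sub hkN]
      push_cast
      field_simp

lemma L_mem_set (m : ℕ) :
    {z : ℝ | ∃ k : ℕ, k ≤ 2^m + 1 ∧ z = (k : ℝ) / ((2^m + 1 : ℕ) : ℝ)}
      ∈ {S : Set ℝ | ((((2^m + 1 : ℕ) : ℝ) - 1) / ((2^m + 1 : ℕ) : ℝ) ∈ S ∧
          (0:ℝ) ∈ S ∧ (1:ℝ) ∈ S) ∧
        ∀ y ∈ S, max 0 (2 * y - 1) ∈ S ∧ (1 - y) ∈ S} := by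
  have hnp := nr_pos m
  have hnne : ((2^m + 1 : ℕ) : ℝ) ≠ 0 := ne_of_gt hnp
  constructor
  · refine ⟨⟨2^m, Nat.le_add_right _ 1, by push_cast; ring⟩, ⟨0, Nat.zero_le _, by simp⟩,
      ⟨2^m+1, le_refl _, by field_simp⟩⟩
  · rintro y ⟨k, hk, rfl⟩
    have hp : 1 ≤ 2^m := Nat.one_le_two_pow
    constructor
    · rcases le_or_gt (2*k) (2^m+1) with h2 | h2
      · have hle : 2 * ((k:ℝ)/((2^m + 1 : ℕ) : ℝ)) - 1 ≤ 0 := by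
          rw [sub_nonpos, ← mul_div_assoc, div_le_one hnp]
          exact_mod_cast h2
        rw [max_eq_left hle]
        exact ⟨0, Nat.zero_le _, by simp⟩
      · refine ⟨2*k - (2^m+1), by omega, ?_⟩
        have hge : 0 ≤ 2 * ((k:ℝ)/((2^m + 1 : ℕ) : ℝ)) - 1 := by
          rw [sub_nonneg, ← mul_div_assoc, le_div_iff₀ hnp, one_mul]
          exact_mod_cast le_of_lt h2
        rw [max_eq_right hge, Nat.cast_sub (le_of_lt h2)]
        push_cast
        field_simp
    · refine ⟨2^m+1-k, by omega, ?_⟩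
      rw [Nat.cast_sub hk]
      push_cast
      field_simp



theorem fermat_like_proper_subalgebra (m : ℕ) (hm : 2 < m) :
    (⋂₀ {S : Set ℝ | ((((2^m + 1 : ℕ) : ℝ) - 1) / ((2^m + 1 : ℕ) : ℝ) ∈ S ∧
          (0:ℝ) ∈ S ∧ (1:ℝ) ∈ S) ∧
        ∀ y ∈ S, max 0 (2 * y - 1) ∈ S ∧ (1 - y) ∈ S}).ncard ≤ 2 * m + 2 ∧
    2 * m + 2 < 2^m + 1 ∧
    (⋂₀ {S : Set ℝ | ((((2^m + 1 : ℕ) : ℝ) - 1) / ((2^m + 1 : ℕ) : ℝ) ∈ S ∧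
          (0:ℝ) ∈ S ∧ (1:ℝ) ∈ S) ∧
        ∀ y ∈ S, max 0 (2 * y - 1) ∈ S ∧ (1 - y) ∈ S})
      ⊂ {z : ℝ | ∃ k : ℕ, k ≤ 2^m + 1 ∧ z = (k : ℝ) / ((2^m + 1 : ℕ) : ℝ)} ∧
    ¬ (⋂₀ {S : Set ℝ | ((((2^m + 1 : ℕ) : ℝ) - 1) / ((2^m + 1 : ℕ) : ℝ) ∈ S ∧
          (0:ℝ) ∈ S ∧ (1:ℝ) ∈ S) ∧
        ∀ y ∈ S, max 0 (2 * y - 1) ∈ S ∧ (1 - y) ∈ S}) ⊆ ({0, 1} : Set ℝ) := by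
  have hnp := nr_pos m
  have hnne : ((2^m + 1 : ℕ) : ℝ) ≠ 0 := ne_of_gt hnp
  have h9 : (9:ℕ) ≤ 2^m + 1 := by
    have : (8:ℕ) ≤ 2^m := by
      calc (8:ℕ) = 2^3 := by norm_num
      _ ≤ 2^m := Nat.pow_le_pow_right (by norm_num) hm
    omega
  have hGS : (⋂₀ {S : Set ℝ | ((((2^m + 1 : ℕ) : ℝ) - 1) / ((2^m + 1 : ℕ) : ℝ) ∈ S ∧
          (0:ℝ) ∈ S ∧ (1:ℝ) ∈ S) ∧
        ∀ y ∈ S, max 0 (2 * y - 1) ∈ S ∧ (1 - y) ∈ S}) ⊆ Sr m :=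
    Set.sInter_subset_of_mem (Sr_mem_set m hm)
  have hSrEq : Sr m = ↑((Fe m).image (fun k : ℕ => (k : ℝ) / ((2^m + 1 : ℕ) : ℝ))) := by
    rw [Finset.coe_image]; rfl
  refine ⟨?_, pow_gap m hm, ?_, ?_⟩
  · calc _ ≤ (Sr m).ncard :=
          Set.ncard_le_ncard hGS (by rw [hSrEq]; exact Finset.finite_toSet _)
      _ ≤ 2 * m + 2 := by
          rw [hSrEq, Set.ncard_coe_finset]
          exact (Finset.card_image_le).trans (Fe_card hm)
  · rw [Set.ssubset_def]
    refine ⟨Set.sInter_subset_of_mem (L_mem_set m), fun hcon => ?_⟩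
    have h3L : (3:ℝ) / ((2^m + 1 : ℕ) : ℝ) ∈
        {z : ℝ | ∃ k : ℕ, k ≤ 2^m + 1 ∧ z = (k : ℝ) / ((2^m + 1 : ℕ) : ℝ)} :=
      ⟨3, by omega, by norm_num⟩
    have h3G := hGS (hcon h3L)
    obtain ⟨k, hk, heq⟩ := h3G
    rw [Finset.mem_coe] at hk
    have hk3 : (k:ℝ) = 3 := by
      field_simp at heq
      exact heq
    have : k = 3 := by exact_mod_cast hk3
    subst this
    exact three_not_Fe hm hk
  · intro hcon
    have hgen : (((2^m + 1 : ℕ) : ℝ) - 1) / ((2^m + 1 : ℕ) : ℝ) ∈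
        (⋂₀ {S : Set ℝ | ((((2^m + 1 : ℕ) : ℝ) - 1) / ((2^m + 1 : ℕ) : ℝ) ∈ S ∧
          (0:ℝ) ∈ S ∧ (1:ℝ) ∈ S) ∧
        ∀ y ∈ S, max 0 (2 * y - 1) ∈ S ∧ (1 - y) ∈ S}) :=
      Set.mem_sInter.2 fun S hS => hS.1.1
    have h9R : (9:ℝ) ≤ ((2^m + 1 : ℕ) : ℝ) := by exact_mod_cast h9
    rcases hcon hgen with h | h
    · rw [div_eq_zero_iff] at h
      rcases h with h | h <;> linarith
    · rw [Set.mem_singleton_iff, div_eq_one_iff_eq hnne] at h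
      linarith
end
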